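/- arXiv:2509.16178 — 3 statements merged into one kernel-verified Lean document; each statement's English description precedes it below -/
import Mathlib

section
/- Let 0 < q < 1. Then ∏_{j ≥ 1} 1/(1 - q^j)^j ≤ exp( ∑_{j ≥ 1} j · q^j/(1 - q^j) ), and for any ε > 0 there is δ > 0 such that for all q with 1 - δ < q < 1 one has ∏_{j ≥ 1} (1 - q^j)^{-j} ≤ exp( (ζ(3) + ε)/(1-q)^2 ). -/
/-!
Taking logarithms, the product is `exp (∑ⱼ j · (-log (1 - qʲ)))`, and the termwise bound
`-log (1 - x) ≤ x / (1 - x)` gives the first inequality. For the second, expand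
`-log (1 - qʲ) = ∑ₖ q^{jk} / k` and sum over `j` first: `∑ⱼ j q^{jk} = qᵏ / (1 - qᵏ)²`.
AM–GM on the terms of `1 + q + ⋯ + q^{k-1}` gives `(1 - qᵏ)² ≥ k² q^{k-1} (1 - q)²`, so the
`k`-th column is at most `1 / (k³ (1 - q)²)`. Hence the product is at most `exp (ζ(3) / (1 - q)²)`
for every `q ∈ [0, 1)`, and any `δ ≤ 1` works.
-/

open Real Finset

lemma Real.neg_log_one_sub_le_div {x : ℝ} (hx : x < 1) : -log (1 - x) ≤ x / (1 - x) := by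
  have hlog := one_sub_inv_le_log_of_pos (sub_pos.mpr hx)
  have hinv : 1 - (1 - x)⁻¹ = -(x / (1 - x)) := by
    field_simp [(sub_pos.mpr hx).ne']
    ring
  linarith

lemma hasSum_succ_mul_pow_succ {𝕜 : Type*} [NormedDivisionRing 𝕜] {r : 𝕜} (hr : ‖r‖ < 1) :
    HasSum (fun n : ℕ ↦ ((n : 𝕜) + 1) * r ^ (n + 1)) (r / (1 - r) ^ 2) := by
  have hshift := (hasSum_nat_add_iff (f := fun n : ℕ ↦ (n : 𝕜) * r ^ n) 1).mpr
    (by simpa using hasSum_coe_mul_geometric_of_norm_lt_one hr)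
  simpa using hshift

lemma tsum_eq_tsum_of_hasSum_of_nonneg {β γ : Type*} {f : β → γ → ℝ} {r : β → ℝ} {c : γ → ℝ}
    (hf : ∀ b k, 0 ≤ f b k) (hrow : ∀ b, HasSum (f b) (r b))
    (hcol : ∀ k, HasSum (fun b ↦ f b k) (c k)) (hr : Summable r) :
    ∑' b, r b = ∑' k, c k := by
  have hsum : Summable (Function.uncurry f) := by
    refine (summable_prod_of_nonneg fun p ↦ hf p.1 p.2).mpr ⟨fun b ↦ (hrow b).summable, ?_⟩
    simpa only [Function.uncurry_apply_pair, (hrow _).tsum_eq] using hr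
  calc ∑' b, r b = ∑' (b) (k), f b k := tsum_congr fun b ↦ (hrow b).tsum_eq.symm
    _ = ∑' (k) (b), f b k := hsum.tsum_comm.symm
    _ = ∑' k, c k := tsum_congr fun k ↦ (hcol k).tsum_eq

lemma succ_mul_sqrt_pow_le_geom_sum {q : ℝ} (hq : 0 ≤ q) (n : ℕ) :
    ((n : ℝ) + 1) * √q ^ n ≤ ∑ i ∈ range (n + 1), q ^ i := by
  have hpair : ∀ i ∈ range (n + 1), 2 * √q ^ n ≤ q ^ i + q ^ (n - i) := by
    intro i hi
    have hsplit : √q ^ i * √q ^ (n - i) = √q ^ n := by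
      rw [← pow_add, Nat.add_sub_cancel' (Nat.lt_succ_iff.mp (mem_range.mp hi))]
    have hsq : ∀ m, q ^ m = (√q ^ m) ^ 2 := fun m ↦ by
      rw [← pow_mul, mul_comm, pow_mul, sq_sqrt hq]
    rw [hsq i, hsq (n - i)]
    nlinarith [sq_nonneg (√q ^ i - √q ^ (n - i))]
  have hrefl : ∑ i ∈ range (n + 1), q ^ (n - i) = ∑ i ∈ range (n + 1), q ^ i := by
    simpa using sum_range_reflect (q ^ ·) (n + 1)
  have h := sum_le_sum hpair
  rw [sum_add_distrib, hrefl, sum_const, card_range, nsmul_eq_mul] at h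
  push_cast at h
  linarith

lemma succ_sq_mul_pow_mul_sq_le {q : ℝ} (hq : 0 ≤ q) (n : ℕ) :
    ((n : ℝ) + 1) ^ 2 * q ^ n * (1 - q) ^ 2 ≤ (1 - q ^ (n + 1)) ^ 2 := by
  have hsq : ((n : ℝ) + 1) ^ 2 * q ^ n = (((n : ℝ) + 1) * √q ^ n) ^ 2 := by
    rw [mul_pow, ← pow_mul, mul_comm n 2, pow_mul, sq_sqrt hq]
  rw [← mul_neg_geom_sum, hsq, mul_pow (1 - q), mul_comm ((1 - q) ^ 2)]
  gcongr
  exact succ_mul_sqrt_pow_le_geom_sum hq n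

section

variable {q : ℝ}

lemma one_sub_pow_succ_pos (hq0 : 0 ≤ q) (hq1 : q < 1) (n : ℕ) : 0 < 1 - q ^ (n + 1) :=
  sub_pos.mpr (pow_lt_one₀ hq0 hq1 n.succ_ne_zero)

lemma pow_succ_div_sq_div_le (hq0 : 0 ≤ q) (hq1 : q < 1) (n : ℕ) :
    q ^ (n + 1) / (1 - q ^ (n + 1)) ^ 2 / ((n : ℝ) + 1) ≤ 1 / ((n : ℝ) + 1) ^ 3 / (1 - q) ^ 2 := by
  have h1q : 0 < 1 - q := by linarith
  have hden := one_sub_pow_succ_pos hq0 hq1 n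
  rw [div_div, div_div, div_le_div_iff₀ (by positivity) (by positivity)]
  calc q ^ (n + 1) * (((n : ℝ) + 1) ^ 3 * (1 - q) ^ 2)
      ≤ q ^ n * (((n : ℝ) + 1) ^ 3 * (1 - q) ^ 2) :=
        mul_le_mul_of_nonneg_right (pow_le_pow_of_le_one hq0 hq1.le n.le_succ) (by positivity)
    _ = ((n : ℝ) + 1) ^ 2 * q ^ n * (1 - q) ^ 2 * ((n : ℝ) + 1) := by ring
    _ ≤ (1 - q ^ (n + 1)) ^ 2 * ((n : ℝ) + 1) := by
        gcongr
        exact succ_sq_mul_pow_mul_sq_le hq0 n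
    _ = 1 * ((1 - q ^ (n + 1)) ^ 2 * ((n : ℝ) + 1)) := by ring

lemma summable_succ_mul_pow_succ_div (hq0 : 0 ≤ q) (hq1 : q < 1) :
    Summable fun j : ℕ ↦ ((j : ℝ) + 1) * q ^ (j + 1) / (1 - q ^ (j + 1)) := by
  have hgeom : Summable fun j : ℕ ↦ ((j : ℝ) + 1) * q ^ (j + 1) / (1 - q) :=
    (hasSum_succ_mul_pow_succ (by rwa [norm_of_nonneg hq0])).summable.div_const _
  refine hgeom.of_nonneg_of_le (fun j ↦ ?_) (fun j ↦ ?_)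
  · have := one_sub_pow_succ_pos hq0 hq1 j
    positivity
  · have h1q : 0 < 1 - q := by linarith
    gcongr
    exact pow_le_of_le_one hq0 hq1.le j.succ_ne_zero

lemma succ_mul_neg_log_le (hq0 : 0 ≤ q) (hq1 : q < 1) (j : ℕ) :
    ((j : ℝ) + 1) * -log (1 - q ^ (j + 1)) ≤ ((j : ℝ) + 1) * q ^ (j + 1) / (1 - q ^ (j + 1)) := by
  rw [mul_div_assoc]
  gcongr
  exact neg_log_one_sub_le_div (pow_lt_one₀ hq0 hq1 j.succ_ne_zero)

lemma summable_succ_mul_neg_log (hq0 : 0 ≤ q) (hq1 : q < 1) :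
    Summable fun j : ℕ ↦ ((j : ℝ) + 1) * -log (1 - q ^ (j + 1)) := by
  refine (summable_succ_mul_pow_succ_div hq0 hq1).of_nonneg_of_le (fun j ↦ ?_)
    (succ_mul_neg_log_le hq0 hq1)
  have hlog : log (1 - q ^ (j + 1)) ≤ 0 :=
    log_nonpos (one_sub_pow_succ_pos hq0 hq1 j).le (by linarith [pow_nonneg hq0 (j + 1)])
  have : (0 : ℝ) ≤ (j : ℝ) + 1 := by positivity
  nlinarith

lemma tprod_inv_one_sub_pow_pow_eq_exp (hq0 : 0 ≤ q) (hq1 : q < 1) :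
    ∏' j : ℕ, (1 - q ^ (j + 1))⁻¹ ^ (j + 1) =
      exp (∑' j : ℕ, ((j : ℝ) + 1) * -log (1 - q ^ (j + 1))) := by
  have hlog : ∀ j : ℕ, log ((1 - q ^ (j + 1))⁻¹ ^ (j + 1)) =
      ((j : ℝ) + 1) * -log (1 - q ^ (j + 1)) := fun j ↦ by
    rw [log_pow, log_inv]
    push_cast
    ring
  simp_rw [← hlog]
  refine (rexp_tsum_eq_tprod (fun j ↦ ?_) ?_).symm
  · have := one_sub_pow_succ_pos hq0 hq1 j
    positivity
  · simpa only [hlog] using summable_succ_mul_neg_log hq0 hq1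

lemma tsum_succ_mul_neg_log_eq (hq0 : 0 ≤ q) (hq1 : q < 1) :
    ∑' j : ℕ, ((j : ℝ) + 1) * -log (1 - q ^ (j + 1)) =
      ∑' k : ℕ, q ^ (k + 1) / (1 - q ^ (k + 1)) ^ 2 / ((k : ℝ) + 1) := by
  have hnorm (n : ℕ) : ‖q ^ (n + 1)‖ < 1 := by
    rw [norm_of_nonneg (pow_nonneg hq0 _)]
    exact pow_lt_one₀ hq0 hq1 n.succ_ne_zero
  refine tsum_eq_tsum_of_hasSum_of_nonneg
    (f := fun j k : ℕ ↦ ((j : ℝ) + 1) * ((q ^ (j + 1)) ^ (k + 1) / ((k : ℝ) + 1)))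
    (fun j k ↦ by positivity) (fun j ↦ (hasSum_pow_div_log_of_abs_lt_one (hnorm j)).mul_left _)
    (fun k ↦ ?_) (summable_succ_mul_neg_log hq0 hq1)
  have hswap : (fun j : ℕ ↦ ((j : ℝ) + 1) * ((q ^ (j + 1)) ^ (k + 1) / ((k : ℝ) + 1))) =
      fun j : ℕ ↦ ((j : ℝ) + 1) * (q ^ (k + 1)) ^ (j + 1) / ((k : ℝ) + 1) := by
    funext j
    rw [← pow_mul, ← pow_mul, mul_comm (j + 1)]
    ring
  rw [hswap]
  exact (hasSum_succ_mul_pow_succ (hnorm k)).div_const _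

lemma tsum_succ_mul_neg_log_le (hq0 : 0 ≤ q) (hq1 : q < 1) :
    ∑' j : ℕ, ((j : ℝ) + 1) * -log (1 - q ^ (j + 1)) ≤
      (∑' n : ℕ, 1 / ((n : ℝ) + 1) ^ 3) / (1 - q) ^ 2 := by
  have hzeta : Summable fun n : ℕ ↦ 1 / ((n : ℝ) + 1) ^ 3 := by
    simpa using (summable_nat_add_iff 1).mpr (summable_one_div_nat_pow.mpr (by norm_num : 1 < 3))
  have hcol_nonneg (k : ℕ) : 0 ≤ q ^ (k + 1) / (1 - q ^ (k + 1)) ^ 2 / ((k : ℝ) + 1) := by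
    positivity
  have hcol : Summable fun k : ℕ ↦ q ^ (k + 1) / (1 - q ^ (k + 1)) ^ 2 / ((k : ℝ) + 1) :=
    (hzeta.div_const _).of_nonneg_of_le hcol_nonneg (pow_succ_div_sq_div_le hq0 hq1)
  rw [tsum_succ_mul_neg_log_eq hq0 hq1, ← tsum_div_const]
  exact hcol.tsum_le_tsum (pow_succ_div_sq_div_le hq0 hq1) (hzeta.div_const _)

lemma tprod_inv_one_sub_pow_pow_le_exp_tsum (hq0 : 0 ≤ q) (hq1 : q < 1) :
    ∏' j : ℕ, (1 - q ^ (j + 1))⁻¹ ^ (j + 1) ≤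
      exp (∑' j : ℕ, ((j : ℝ) + 1) * q ^ (j + 1) / (1 - q ^ (j + 1))) := by
  rw [tprod_inv_one_sub_pow_pow_eq_exp hq0 hq1, exp_le_exp]
  exact (summable_succ_mul_neg_log hq0 hq1).tsum_le_tsum (succ_mul_neg_log_le hq0 hq1)
    (summable_succ_mul_pow_succ_div hq0 hq1)

lemma tprod_inv_one_sub_pow_pow_le_exp_zeta_three (hq0 : 0 ≤ q) (hq1 : q < 1) :
    ∏' j : ℕ, (1 - q ^ (j + 1))⁻¹ ^ (j + 1) ≤
      exp ((∑' n : ℕ, 1 / ((n : ℝ) + 1) ^ 3) / (1 - q) ^ 2) := by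
  rw [tprod_inv_one_sub_pow_pow_eq_exp hq0 hq1, exp_le_exp]
  exact tsum_succ_mul_neg_log_le hq0 hq1

end

theorem product_bound_zeta_three (q : ℝ) (hq0 : 0 < q) (hq1 : q < 1) :
    (∏' j : ℕ, (1 - q ^ (j + 1))⁻¹ ^ (j + 1) ≤
        Real.exp (∑' j : ℕ, (j + 1 : ℝ) * q ^ (j + 1) / (1 - q ^ (j + 1)))) ∧
      ∀ ε > (0 : ℝ), ∃ δ > (0 : ℝ), ∀ q' : ℝ, 1 - δ < q' → q' < 1 →
        ∏' j : ℕ, (1 - q' ^ (j + 1))⁻¹ ^ (j + 1) ≤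
          Real.exp (((∑' n : ℕ, 1 / ((n : ℝ) + 1) ^ 3) + ε) / (1 - q') ^ 2) := by
  refine ⟨tprod_inv_one_sub_pow_pow_le_exp_tsum hq0.le hq1, fun ε hε ↦ ⟨1, one_pos, ?_⟩⟩
  intro q' hq'0 hq'1
  refine (tprod_inv_one_sub_pow_pow_le_exp_zeta_three (by linarith) hq'1).trans ?_
  have h1q : 0 < 1 - q' := by linarith
  gcongr
  linarith
end

section
/- Let 0 < q < 1. For any ε > 0 there is δ > 0 such that for all q with 1 - δ < q < 1, ∏_{j ≥ 1} (1 - q^j)^{-2} ≤ exp( (2ζ(2) + ε)/(1-q) ). -/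
/-!
Taking logarithms, `-log ∏ (1 - q^j) = ∑_j ∑_n q^{jn}/n = ∑_n (1/n) q^n/(1 - q^n)`, and
`n q^n (1 - q) ≤ 1 - q^n` bounds the `n`-th term by `1/(n²(1 - q))`. Hence
`∏ (1 - q^j)⁻² ≤ exp (2ζ(2)/(1 - q))`.
-/

open Real

section
variable {q : ℝ}

lemma natCast_mul_pow_mul_one_sub_le (hq0 : 0 ≤ q) (hq1 : q ≤ 1) (n : ℕ) :
    n * q ^ n * (1 - q) ≤ 1 - q ^ n := by
  have hgeom : (∑ i ∈ Finset.range n, q ^ i) * (1 - q) = 1 - q ^ n := by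
    linear_combination -geom_sum_mul q n
  have hle : n * q ^ n ≤ ∑ i ∈ Finset.range n, q ^ i := by
    simpa using Finset.card_nsmul_le_sum (Finset.range n) (q ^ ·) (q ^ n) fun i hi =>
      pow_le_pow_of_le_one hq0 hq1 (Finset.mem_range.mp hi).le
  rw [← hgeom]
  exact mul_le_mul_of_nonneg_right hle (sub_nonneg.2 hq1)

lemma sum_pow_succ_le_div_one_sub {r : ℝ} (hr0 : 0 ≤ r) (hr1 : r < 1) (s : Finset ℕ) :
    ∑ j ∈ s, r ^ (j + 1) ≤ r / (1 - r) := by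
  have hgeom : HasSum (fun j : ℕ => r ^ (j + 1)) (r / (1 - r)) := by
    simpa [pow_succ, div_eq_mul_inv, mul_comm] using
      (hasSum_geometric_of_lt_one hr0 hr1).mul_right r
  exact sum_le_hasSum s (fun j _ => by positivity) hgeom

lemma pow_succ_div_one_sub_pow_succ_le (hq0 : 0 ≤ q) (hq1 : q < 1) (n : ℕ) :
    q ^ (n + 1) / (1 - q ^ (n + 1)) ≤ 1 / ((n + 1) * (1 - q)) := by
  have hpow : q ^ (n + 1) < 1 := pow_lt_one₀ hq0 hq1 n.succ_ne_zero
  rw [div_le_div_iff₀ (sub_pos.2 hpow) (by nlinarith)]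
  simpa [mul_assoc, mul_comm, mul_left_comm] using
    natCast_mul_pow_mul_one_sub_le hq0 hq1.le (n + 1)

lemma hasSum_one_div_nat_succ_sq :
    HasSum (fun n : ℕ => 1 / ((n : ℝ) + 1) ^ 2) (π ^ 2 / 6) := by
  simpa using (hasSum_nat_add_iff' 1).2 hasSum_zeta_two

lemma sum_neg_log_one_sub_pow_succ_le (hq0 : 0 ≤ q) (hq1 : q < 1) (s : Finset ℕ) :
    ∑ j ∈ s, -log (1 - q ^ (j + 1)) ≤ π ^ 2 / 6 / (1 - q) := by
  have hlog : HasSum (fun n : ℕ => ∑ j ∈ s, (q ^ (j + 1)) ^ (n + 1) / (n + 1))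
      (∑ j ∈ s, -log (1 - q ^ (j + 1))) :=
    hasSum_sum fun j _ => hasSum_pow_div_log_of_abs_lt_one <| by
      rw [abs_of_nonneg (by positivity)]
      exact pow_lt_one₀ hq0 hq1 j.succ_ne_zero
  have hzeta : HasSum (fun n : ℕ => 1 / ((n : ℝ) + 1) ^ 2 / (1 - q)) (π ^ 2 / 6 / (1 - q)) :=
    hasSum_one_div_nat_succ_sq.div_const _
  refine hasSum_le (fun n => ?_) hlog hzeta
  have hq1n : q ^ (n + 1) < 1 := pow_lt_one₀ hq0 hq1 n.succ_ne_zero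
  calc ∑ j ∈ s, (q ^ (j + 1)) ^ (n + 1) / (n + 1)
      = (∑ j ∈ s, (q ^ (n + 1)) ^ (j + 1)) / (n + 1) := by
        rw [Finset.sum_div]
        simp only [← pow_mul, mul_comm]
    _ ≤ q ^ (n + 1) / (1 - q ^ (n + 1)) / (n + 1) := by
        gcongr
        exact sum_pow_succ_le_div_one_sub (by positivity) hq1n s
    _ ≤ 1 / ((n + 1) * (1 - q)) / (n + 1) := by
        gcongr ?_ / _
        exact pow_succ_div_one_sub_pow_succ_le hq0 hq1 n
    _ = 1 / ((n : ℝ) + 1) ^ 2 / (1 - q) := by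
        field_simp

lemma tprod_inv_one_sub_pow_succ_sq_le (hq0 : 0 ≤ q) (hq1 : q < 1) :
    ∏' j : ℕ, ((1 - q ^ (j + 1))⁻¹) ^ 2 ≤ exp (2 * (π ^ 2 / 6) / (1 - q)) := by
  have h1q : 0 < 1 - q := sub_pos.2 hq1
  refine tprod_le_of_prod_le' (one_le_exp (by positivity)) fun s => ?_
  have hlog : ∀ j : ℕ, log (((1 - q ^ (j + 1))⁻¹) ^ 2) = 2 * -log (1 - q ^ (j + 1)) := by
    intro j
    rw [log_pow, log_inv, Nat.cast_ofNat]
  calc ∏ j ∈ s, ((1 - q ^ (j + 1))⁻¹) ^ 2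
      = exp (∑ j ∈ s, 2 * -log (1 - q ^ (j + 1))) := by
        rw [exp_sum]
        refine Finset.prod_congr rfl fun j _ => ?_
        have hpos : 0 < 1 - q ^ (j + 1) := sub_pos.2 (pow_lt_one₀ hq0 hq1 j.succ_ne_zero)
        rw [← hlog, exp_log (by positivity)]
    _ ≤ exp (2 * (π ^ 2 / 6) / (1 - q)) := by
        rw [exp_le_exp, ← Finset.mul_sum, mul_div_assoc]
        gcongr
        exact sum_neg_log_one_sub_pow_succ_le hq0 hq1 s

end

theorem product_bound_zeta_two_general :
    ∀ ε > (0 : ℝ), ∃ δ > (0 : ℝ), ∀ q' : ℝ, 1 - δ < q' → q' < 1 →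
      ∏' j : ℕ, ((1 - q' ^ (j + 1))⁻¹) ^ 2 ≤
        Real.exp ((2 * (π ^ 2 / 6) + ε) / (1 - q')) := by
  intro ε hε
  refine ⟨1, one_pos, fun q' hq'0 hq'1 => ?_⟩
  have h1q : 0 < 1 - q' := sub_pos.2 hq'1
  refine (tprod_inv_one_sub_pow_succ_sq_le (by linarith) hq'1).trans ?_
  gcongr
  linarith

theorem product_bound_zeta_two (q : ℝ) (hq0 : 0 < q) (hq1 : q < 1) :
    ∀ ε > (0 : ℝ), ∃ δ > (0 : ℝ), ∀ q' : ℝ, 1 - δ < q' → q' < 1 →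
      ∏' j : ℕ, ((1 - q' ^ (j + 1))⁻¹) ^ 2 ≤
        Real.exp ((2 * (π ^ 2 / 6) + ε) / (1 - q')) :=
  product_bound_zeta_two_general
end

section
/- Let p be prime and r ≥ 1. For every n ≥ 0, q^n / ∏_{j=1}^{n}(1 - q^j) = ∑_{m ≥ 1} q^{nm} · ∏_{j ≥ 1, j ≠ m} (1 - q^{j-m})^{-1}, where q = p^{-r}; in particular the series on the right converges. -/
/-!
For `0 < q < 1`, the factors with `j < m` multiply to
`∏_{k=1}^m (1 - q^{-k})⁻¹ = (-1)^m q^{m(m+1)/2} / (q;q)_m` and those with `j > m` to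
`1 / (q;q)_∞`, so the `m`-th term is `q^n / (q;q)_∞ · c_m (q^{n+1})^m` with
`c_m = (-1)^m q^{m(m-1)/2} / (q;q)_m`. Euler's identity `∑ c_m z^m = ∏_{i ≥ 0} (1 - q^i z)`,
which follows from the functional equation `f z = (1 - z) f (q z)` of the left side and its
continuity at `0`, turns the sum into `q^n (q^{n+1};q)_∞ / (q;q)_∞ = q^n / (q;q)_n`.
-/

open Filter Finset Topology

/-- The `q`-Pochhammer symbol `(q;q)_m`. -/
noncomputable def qPochhammer (q : ℝ) (m : ℕ) : ℝ := ∏ j ∈ Icc 1 m, (1 - q ^ j)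

noncomputable def eulerCoeff (q : ℝ) (m : ℕ) : ℝ :=
  (-1) ^ m * q ^ m.choose 2 / qPochhammer q m

noncomputable def eulerSeries (q z : ℝ) : ℝ := ∑' m, eulerCoeff q m * z ^ m

section

variable {q : ℝ}

lemma one_sub_pow_pos (hq0 : 0 < q) (hq1 : q < 1) {k : ℕ} (hk : k ≠ 0) : 0 < 1 - q ^ k :=
  sub_pos.2 (pow_lt_one₀ hq0.le hq1 hk)

lemma qPochhammer_succ (m : ℕ) : qPochhammer q (m + 1) = qPochhammer q m * (1 - q ^ (m + 1)) :=
  prod_Icc_succ_top (by omega) _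

lemma qPochhammer_pos (hq0 : 0 < q) (hq1 : q < 1) (m : ℕ) : 0 < qPochhammer q m :=
  prod_pos fun j hj => one_sub_pow_pos hq0 hq1 (by grind)

lemma eulerCoeff_zero : eulerCoeff q 0 = 1 := by
  simp [eulerCoeff, qPochhammer]

lemma eulerCoeff_succ (hq0 : 0 < q) (hq1 : q < 1) (m : ℕ) :
    eulerCoeff q (m + 1) = -q ^ m * eulerCoeff q m / (1 - q ^ (m + 1)) := by
  have := (qPochhammer_pos hq0 hq1 m).ne'
  have := (one_sub_pow_pos hq0 hq1 m.add_one_ne_zero).ne'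
  rw [eulerCoeff, eulerCoeff, qPochhammer_succ, Nat.choose_succ_succ, Nat.choose_one_right]
  field_simp
  ring

lemma eulerCoeff_ne_zero (hq0 : 0 < q) (hq1 : q < 1) (m : ℕ) : eulerCoeff q m ≠ 0 := by
  have := (qPochhammer_pos hq0 hq1 m).ne'
  simp [eulerCoeff, hq0.ne', this]

lemma summable_eulerCoeff_mul_pow (hq0 : 0 < q) (hq1 : q < 1) (z : ℝ) :
    Summable fun m => eulerCoeff q m * z ^ m := by
  rcases eq_or_ne z 0 with rfl | hz
  · exact summable_of_ne_finset_zero (s := {0}) fun m hm => by simp_all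
  refine summable_of_ratio_test_tendsto_lt_one zero_lt_one
    (.of_forall fun m => mul_ne_zero (eulerCoeff_ne_zero hq0 hq1 m) (pow_ne_zero m hz)) ?_
  have hratio : ∀ m : ℕ, ‖eulerCoeff q (m + 1) * z ^ (m + 1)‖ / ‖eulerCoeff q m * z ^ m‖
      = q ^ m * |z| / (1 - q ^ (m + 1)) := by
    intro m
    have := eulerCoeff_ne_zero hq0 hq1 m
    have hpos := one_sub_pow_pos hq0 hq1 m.add_one_ne_zero
    rw [eulerCoeff_succ hq0 hq1, Real.norm_eq_abs, Real.norm_eq_abs]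
    simp only [abs_mul, abs_div, abs_neg, abs_pow, abs_of_pos hq0, abs_of_pos hpos]
    field_simp
    ring
  rw [funext hratio]
  have hlim : Tendsto (fun m : ℕ => q ^ m * |z| / (1 - q * q ^ m)) atTop
      (𝓝 (0 * |z| / (1 - q * 0))) :=
    ((tendsto_pow_atTop_nhds_zero_of_lt_one hq0.le hq1).mul_const _).div
      (tendsto_const_nhds.sub ((tendsto_pow_atTop_nhds_zero_of_lt_one hq0.le hq1).const_mul q))
      (by simp)
  simpa [pow_succ'] using hlim

lemma eulerSeries_zero : eulerSeries q 0 = 1 := by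
  rw [eulerSeries, tsum_eq_single 0 fun m hm => by simp [hm], pow_zero, mul_one, eulerCoeff_zero]

lemma eulerSeries_eq_one_sub_mul (hq0 : 0 < q) (hq1 : q < 1) (z : ℝ) :
    eulerSeries q z = (1 - z) * eulerSeries q (q * z) := by
  have hz := summable_eulerCoeff_mul_pow hq0 hq1 z
  have hqz := summable_eulerCoeff_mul_pow hq0 hq1 (q * z)
  have hdiff : eulerSeries q z - eulerSeries q (q * z) = -z * eulerSeries q (q * z) :=
    calc eulerSeries q z - eulerSeries q (q * z)
        = ∑' m, eulerCoeff q m * (1 - q ^ m) * z ^ m := by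
          rw [eulerSeries, eulerSeries, ← hz.tsum_sub hqz]
          exact tsum_congr fun m => by ring
      _ = ∑' m, eulerCoeff q (m + 1) * (1 - q ^ (m + 1)) * z ^ (m + 1) := by
          rw [(hz.sub hqz).congr (fun m => by ring) |>.tsum_eq_zero_add]
          simp
      _ = ∑' m, -z * (eulerCoeff q m * (q * z) ^ m) := by
          refine tsum_congr fun m => ?_
          rw [eulerCoeff_succ hq0 hq1,
            div_mul_cancel₀ _ (one_sub_pow_pos hq0 hq1 m.add_one_ne_zero).ne']
          ring
      _ = -z * eulerSeries q (q * z) := tsum_mul_left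
  linear_combination hdiff

lemma continuousAt_eulerSeries_zero (hq0 : 0 < q) (hq1 : q < 1) :
    ContinuousAt (eulerSeries q) 0 := by
  have hcont : ContinuousOn (eulerSeries q) (Set.Icc (-1) 1) := by
    refine continuousOn_tsum (fun m => by fun_prop)
      (by simpa using (summable_eulerCoeff_mul_pow hq0 hq1 1).abs) fun m z hz => ?_
    rw [norm_mul, norm_pow]
    exact mul_le_of_le_one_right (norm_nonneg _) (pow_le_one₀ (norm_nonneg z) (abs_le.2 hz))
  exact hcont.continuousAt (Icc_mem_nhds (by norm_num) (by norm_num))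

lemma eulerSeries_eq_prod_range_mul (hq0 : 0 < q) (hq1 : q < 1) (z : ℝ) (N : ℕ) :
    eulerSeries q z = (∏ i ∈ range N, (1 - q ^ i * z)) * eulerSeries q (q ^ N * z) := by
  induction N with
  | zero => simp
  | succ N ih =>
    rw [ih, eulerSeries_eq_one_sub_mul hq0 hq1, prod_range_succ, pow_succ', mul_assoc q]
    ring

lemma multipliable_one_sub_pow_mul (hq : |q| < 1) (z : ℝ) :
    Multipliable fun i : ℕ => 1 - q ^ i * z := by
  simpa [sub_eq_add_neg] using
    Real.multipliable_one_add_of_summable ((summable_geometric_of_abs_lt_one hq).mul_right z).neg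

theorem hasSum_eulerCoeff_mul_pow (hq0 : 0 < q) (hq1 : q < 1) (z : ℝ) :
    HasSum (fun m => eulerCoeff q m * z ^ m) (∏' i : ℕ, (1 - q ^ i * z)) := by
  have hq : |q| < 1 := by rwa [abs_of_pos hq0]
  have htail : Tendsto (fun N => eulerSeries q (q ^ N * z)) atTop (𝓝 1) := by
    rw [← eulerSeries_zero (q := q)]
    refine (continuousAt_eulerSeries_zero hq0 hq1).tendsto.comp ?_
    simpa using (tendsto_pow_atTop_nhds_zero_of_lt_one hq0.le hq1).mul_const z
  have hlim := (multipliable_one_sub_pow_mul hq z).hasProd.tendsto_prod_nat.mul htail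
  rw [mul_one] at hlim
  simp_rw [← eulerSeries_eq_prod_range_mul hq0 hq1] at hlim
  rw [← tendsto_nhds_unique tendsto_const_nhds hlim]
  exact (summable_eulerCoeff_mul_pow hq0 hq1 z).hasSum

lemma qPochhammer_eq_prod_range (n : ℕ) :
    qPochhammer q n = ∏ i ∈ range n, (1 - q ^ (i + 1)) := by
  rw [qPochhammer, ← Ico_add_one_right_eq_Icc, prod_Ico_eq_prod_range]
  simp [add_comm]

lemma multipliable_one_sub_pow_succ (hq : |q| < 1) :
    Multipliable fun i : ℕ => 1 - q ^ (i + 1) := by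
  simpa [← pow_succ] using multipliable_one_sub_pow_mul hq q

lemma tprod_one_sub_pow_succ_ne_zero (hq : |q| < 1) : ∏' i : ℕ, (1 - q ^ (i + 1)) ≠ 0 := by
  have hne : ∀ i : ℕ, 1 + -q ^ (i + 1) ≠ 0 := fun i => by
    have := pow_lt_one₀ (abs_nonneg q) hq i.add_one_ne_zero
    rw [← abs_pow] at this
    linarith [le_abs_self (q ^ (i + 1))]
  simpa [sub_eq_add_neg] using tprod_one_add_ne_zero_of_summable hne
    (by simpa [pow_succ] using (summable_geometric_of_abs_lt_one hq).abs.mul_right |q|)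

lemma tprod_one_sub_pow_succ_eq_qPochhammer_mul (hq : |q| < 1) (n : ℕ) :
    ∏' i : ℕ, (1 - q ^ (i + 1)) =
      qPochhammer q n * ∏' i : ℕ, (1 - q ^ i * q ^ (n + 1)) := by
  have htail :
      HasProd (fun i => 1 - q ^ (i + n + 1)) (∏' i : ℕ, (1 - q ^ i * q ^ (n + 1))) := by
    convert (multipliable_one_sub_pow_mul hq (q ^ (n + 1))).hasProd using 3 with i
    ring
  rw [(htail.prod_range_mul (f := fun i => 1 - q ^ (i + 1))).tprod_eq, qPochhammer_eq_prod_range]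

lemma prod_range_inv_one_sub_zpow (hq0 : 0 < q) (hq1 : q < 1) (m : ℕ) :
    ∏ j ∈ range m, (1 - q ^ ((j : ℤ) - m))⁻¹ = eulerCoeff q m * q ^ m := by
  induction m with
  | zero => simp [eulerCoeff_zero]
  | succ m ih =>
    have hlt := pow_lt_one₀ hq0.le hq1 m.add_one_ne_zero
    have hne : 1 - q ^ (m + 1) ≠ 0 := (sub_pos.2 hlt).ne'
    have hne' : q ^ (m + 1) - 1 ≠ 0 := (sub_neg.2 hlt).ne
    have hshift (j : ℕ) : ((j + 1 : ℕ) : ℤ) - ((m + 1 : ℕ) : ℤ) = (j : ℤ) - m := by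
      push_cast; ring
    rw [prod_range_succ', Nat.cast_zero, zero_sub, zpow_neg, zpow_natCast]
    simp only [hshift, ih, eulerCoeff_succ hq0 hq1]
    field_simp
    ring

lemma hasProd_inv_one_sub_zpow (hq0 : 0 < q) (hq1 : q < 1) (m : ℕ) :
    HasProd (fun j : ℕ => if j = m then 1 else (1 - q ^ ((j : ℤ) - m))⁻¹)
      (eulerCoeff q m * q ^ m * (∏' i : ℕ, (1 - q ^ (i + 1)))⁻¹) := by
  set G : ℕ → ℝ := fun j => if j = m then 1 else (1 - q ^ ((j : ℤ) - m))⁻¹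
  have hq : |q| < 1 := by rwa [abs_of_pos hq0]
  have hshift : (fun i => G (i + (m + 1))) = fun i => (1 - q ^ (i + 1))⁻¹ := funext fun i => by
    simp only [G]
    have hexp : ((i + (m + 1) : ℕ) : ℤ) - m = ((i + 1 : ℕ) : ℤ) := by push_cast; ring
    rw [if_neg (by omega), hexp, zpow_natCast]
  have htail : HasProd (fun i => G (i + (m + 1))) (∏' i : ℕ, (1 - q ^ (i + 1)))⁻¹ :=
    hshift ▸ (multipliable_one_sub_pow_succ hq).hasProd.inv₀ (tprod_one_sub_pow_succ_ne_zero hq)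
  have hhead : ∏ j ∈ range (m + 1), G j = eulerCoeff q m * q ^ m := by
    rw [prod_range_succ, ← prod_range_inv_one_sub_zpow hq0 hq1]
    simp only [G, if_pos rfl, mul_one]
    exact prod_congr rfl fun j hj => if_neg (by simp at hj; omega)
  simpa [hhead] using htail.prod_range_mul

end

theorem nilpotent_cohen_lenstra_identity (p r : ℕ) (hp : p.Prime) (hr : 1 ≤ r)
    (q : ℝ) (hq : q = (p : ℝ) ^ (-(r : ℤ))) (n : ℕ) :
    HasSum
      (fun m : ℕ =>
        q ^ (n * (m + 1)) *
          ∏' j : ℕ, (if j + 1 = m + 1 then 1 else (1 - q ^ ((j : ℤ) + 1 - (m + 1)))⁻¹))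
      (q ^ n / ∏ j ∈ Finset.Icc 1 n, (1 - q ^ j)) := by
  have hp1 : (1 : ℝ) < p := by exact_mod_cast hp.one_lt
  have hq0 : 0 < q := hq ▸ zpow_pos (by positivity) _
  have hq1 : q < 1 := hq ▸ zpow_lt_one_of_neg₀ hp1 (by omega)
  have habs : |q| < 1 := by rwa [abs_of_pos hq0]
  have hvalue : q ^ n / qPochhammer q n =
      q ^ n * (∏' i : ℕ, (1 - q ^ (i + 1)))⁻¹ * ∏' i : ℕ, (1 - q ^ i * q ^ (n + 1)) := by
    have hP := tprod_one_sub_pow_succ_ne_zero habs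
    rw [tprod_one_sub_pow_succ_eq_qPochhammer_mul habs n] at hP ⊢
    generalize ∏' i : ℕ, (1 - q ^ i * q ^ (n + 1)) = T at hP ⊢
    field_simp [left_ne_zero_of_mul hP, right_ne_zero_of_mul hP]
  rw [← qPochhammer, hvalue]
  refine ((hasSum_eulerCoeff_mul_pow hq0 hq1 (q ^ (n + 1))).mul_left _).congr_fun fun m => ?_
  simp only [add_left_inj, add_sub_add_right_eq_sub,
    (hasProd_inv_one_sub_zpow hq0 hq1 m).tprod_eq]
  ring
end
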